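/- arXiv:1211.3398 — 6 statements merged into one kernel-verified Lean document; each statement's English description precedes it below -/
import Mathlib

section
/- Let I = (x_1^2+x_1,...,x_n^2+x_n, f) be a boolean ideal and g a polynomial in Z_2[x_1,...,x_n]. Then g ∈ I if and only if (f+1)·g ≡ 0 modulo (x_1^2+x_1,...,x_n^2+x_n). -/
open MvPolynomial

lemma two_eq_zero_poly (n : ℕ) : (2 : MvPolynomial (Fin n) (ZMod 2)) = 0 := by
  rw [show (2 : MvPolynomial (Fin n) (ZMod 2)) = C 2 from (map_ofNat C 2).symm,
    show (2 : ZMod 2) = 0 from by decide, map_zero]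

lemma idem_mem (n : ℕ) (p : MvPolynomial (Fin n) (ZMod 2)) :
    p ^ 2 + p ∈ Ideal.span (Set.range fun i : Fin n => (X i : MvPolynomial (Fin n) (ZMod 2)) ^ 2 + X i) := by
  have h2 := two_eq_zero_poly n
  induction p using MvPolynomial.induction_on with
  | C a =>
    have : (a : ZMod 2) ^ 2 + a = 0 := by revert a; decide
    rw [show (C a : MvPolynomial (Fin n) (ZMod 2)) ^ 2 + C a = C (a ^ 2 + a) from by
      rw [map_add, map_pow]]
    rw [this, map_zero]
    exact Ideal.zero_mem _
  | add p q hp hq =>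
    have e : (p + q) ^ 2 + (p + q) = (p ^ 2 + p) + (q ^ 2 + q) + 2 * (p * q) := by ring
    rw [e, h2]
    simpa using add_mem hp hq
  | mul_X p i hp =>
    have e : (p * X i) ^ 2 + p * X i
        = p ^ 2 * (X i ^ 2 + X i) + (p ^ 2 + p) * X i + (-(p ^ 2 * X i)) * 2 := by ring
    rw [e, h2]
    simp only [mul_zero, add_zero]
    exact add_mem (Ideal.mul_mem_left _ _ (Ideal.subset_span ⟨i, rfl⟩))
      (Ideal.mul_mem_right _ _ hp)

theorem stmt_11 (n : ℕ) (f g : MvPolynomial (Fin n) (ZMod 2)) :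
    g ∈ Ideal.span ((Set.range fun i : Fin n => (X i : MvPolynomial (Fin n) (ZMod 2)) ^ 2 + X i) ∪ {f}) ↔
      (f + 1) * g ∈
        Ideal.span (Set.range fun i : Fin n => (X i : MvPolynomial (Fin n) (ZMod 2)) ^ 2 + X i) := by
  have h2 := two_eq_zero_poly n
  constructor
  · intro hg
    rw [Ideal.span_union, Submodule.mem_sup] at hg
    obtain ⟨b, hb, c, hc, rfl⟩ := hg
    rw [Ideal.mem_span_singleton] at hc
    obtain ⟨d, rfl⟩ := hc
    have e : (f + 1) * (b + f * d) = (f + 1) * b + d * (f ^ 2 + f) := by ring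
    rw [e]
    exact add_mem (Ideal.mul_mem_left _ _ hb) (Ideal.mul_mem_left _ _ (idem_mem n f))
  · intro h
    rw [show g = (f + 1) * g + f * g from by linear_combination (-(f * g)) * h2]
    exact add_mem
      (Ideal.span_mono Set.subset_union_left h)
      (Ideal.mul_mem_right _ _ (Ideal.subset_span (Or.inr rfl)))
end

section
/- Let I = (x_1^2+x_1,...,x_n^2+x_n, f) be a boolean ideal and g a polynomial. Then g ∈ I if and only if f·g ≡ g modulo (x_1^2+x_1,...,x_n^2+x_n). -/
open MvPolynomial

lemma sq_sub_mem (n : ℕ) (p : MvPolynomial (Fin n) (ZMod 2)) :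
    p ^ 2 - p ∈
      Ideal.span (Set.range fun i : Fin n => (X i : MvPolynomial (Fin n) (ZMod 2)) ^ 2 + X i) := by
  set S := Ideal.span (Set.range fun i : Fin n => (X i : MvPolynomial (Fin n) (ZMod 2)) ^ 2 + X i)
    with hS
  induction p using MvPolynomial.induction_on with
  | C a =>
    have : (a : ZMod 2) ^ 2 = a := by revert a; decide
    simp [← C_pow, this]
  | add p q hp hq =>
    have h2 : (2 : MvPolynomial (Fin n) (ZMod 2)) = 0 := by
      exact_mod_cast CharP.cast_eq_zero (MvPolynomial (Fin n) (ZMod 2)) 2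
    have : (p + q) ^ 2 - (p + q) = (p ^ 2 - p) + (q ^ 2 - q) + 2 * (p * q) := by ring
    rw [this, h2]
    simpa using S.add_mem hp hq
  | mul_X p i hp =>
    have hx : (X i : MvPolynomial (Fin n) (ZMod 2)) ^ 2 + X i ∈ S :=
      Ideal.subset_span ⟨i, rfl⟩
    have hneg : (X i : MvPolynomial (Fin n) (ZMod 2)) ^ 2 - X i ∈ S := by
      have h20 : (2 : MvPolynomial (Fin n) (ZMod 2)) = 0 := by
        exact_mod_cast CharP.cast_eq_zero (MvPolynomial (Fin n) (ZMod 2)) 2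
      have h2 : (2 : MvPolynomial (Fin n) (ZMod 2)) * X i = 0 := by
        rw [h20, zero_mul]
      have : (X i : MvPolynomial (Fin n) (ZMod 2)) ^ 2 - X i
          = (X i ^ 2 + X i) - 2 * X i := by ring
      rw [this, h2, sub_zero]; exact hx
    have : (p * X i) ^ 2 - p * X i
        = p ^ 2 * (X i ^ 2 - X i) + (p ^ 2 - p) * X i := by ring
    rw [this]
    exact S.add_mem (S.mul_mem_left _ hneg) (S.mul_mem_right _ hp)

theorem stmt_12 (n : ℕ) (f g : MvPolynomial (Fin n) (ZMod 2)) :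
    g ∈ Ideal.span ((Set.range fun i : Fin n => (X i : MvPolynomial (Fin n) (ZMod 2)) ^ 2 + X i) ∪ {f}) ↔
      f * g - g ∈
        Ideal.span (Set.range fun i : Fin n => (X i : MvPolynomial (Fin n) (ZMod 2)) ^ 2 + X i) := by
  set S := Ideal.span (Set.range fun i : Fin n => (X i : MvPolynomial (Fin n) (ZMod 2)) ^ 2 + X i)
  set T := Ideal.span ((Set.range fun i : Fin n => (X i : MvPolynomial (Fin n) (ZMod 2)) ^ 2 + X i) ∪ {f})
  have hST : S ≤ T := Ideal.span_mono Set.subset_union_left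
  constructor
  · intro hg
    have hT : T = S ⊔ Ideal.span {f} := Ideal.span_union _ _
    rw [hT] at hg
    obtain ⟨b, hb, c, hc, rfl⟩ := Submodule.mem_sup.mp hg
    obtain ⟨a, rfl⟩ := Ideal.mem_span_singleton'.mp hc
    have : f * (b + a * f) - (b + a * f)
        = (f - 1) * b + a * (f ^ 2 - f) := by ring
    rw [this]
    exact S.add_mem (S.mul_mem_left _ hb) (S.mul_mem_left _ (sq_sub_mem n f))
  · intro h
    have hf : f ∈ T := Ideal.subset_span (Or.inr rfl)
    have hfg : f * g ∈ T := T.mul_mem_right g hf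
    have := T.sub_mem hfg (hST h)
    simpa using this
end

section
/- Let I = (x_1^2+x_1,...,x_n^2+x_n, f) be a boolean ideal and g a polynomial. Then g ∈ I if and only if V(f) ⊆ V(g), where V denotes zero sets in Z_2^n. -/
/-!
Writing `q = |K|`, the ideal generated by the field polynomials `X i ^ q - X i` is exactly the
ideal of polynomials vanishing on all of `K^σ`: modulo these generators every exponent can be
lowered below `q`, and a polynomial of degree `< q` in each variable that vanishes everywhere is
zero. Hence `g ∈ (field polynomials, f)` as soon as `g` vanishes on the zeros of `f`, because then
`g - g * f ^ (q - 1)` vanishes everywhere by Fermat's little theorem.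
-/

open MvPolynomial

namespace MvPolynomial

universe u

variable (σ K : Type u) [Field K] [Fintype K]

noncomputable def fieldIdeal : Ideal (MvPolynomial σ K) :=
  Ideal.span (Set.range fun i => X i ^ Fintype.card K - X i)

variable {σ K}

theorem fieldIdeal_le_ker_eval (a : σ → K) : fieldIdeal σ K ≤ RingHom.ker (eval a) := by
  rw [fieldIdeal, Ideal.span_le]
  rintro _ ⟨i, rfl⟩
  simp [FiniteField.pow_card]

theorem exists_X_pow_sub_X_pow_mem_fieldIdeal (i : σ) (k : ℕ) :
    ∃ m ≤ Fintype.card K - 1, X i ^ k - X i ^ m ∈ fieldIdeal σ K := by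
  induction k using Nat.strong_induction_on with
  | _ k ih =>
    by_cases hk : k < Fintype.card K
    · exact ⟨k, by omega, by simp⟩
    obtain ⟨j, rfl⟩ : ∃ j, k = j + Fintype.card K := ⟨k - Fintype.card K, by omega⟩
    have hq : 1 < Fintype.card K := Fintype.one_lt_card
    obtain ⟨m, hm, hmem⟩ := ih (j + 1) (by omega)
    refine ⟨m, hm, ?_⟩
    rw [← sub_add_sub_cancel _ (X i ^ (j + 1)) _]
    refine add_mem ?_ hmem
    have hgen : X i ^ Fintype.card K - X i ∈ fieldIdeal σ K := Ideal.subset_span ⟨i, rfl⟩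
    convert Ideal.mul_mem_left _ (X i ^ j) hgen using 1
    ring

theorem exists_monomial_sub_monomial_mem_fieldIdeal (d : σ →₀ ℕ) :
    ∃ e : σ →₀ ℕ, e.support ⊆ d.support ∧ (∀ i, e i ≤ Fintype.card K - 1) ∧
      monomial d (1 : K) - monomial e 1 ∈ fieldIdeal σ K := by
  classical
  induction d using Finsupp.induction with
  | zero => exact ⟨0, by simp, by simp, by simp⟩
  | single_add i k d hi hk ih =>
    obtain ⟨e, he_supp, he_le, he_mem⟩ := ih
    obtain ⟨m, hm, hm_mem⟩ := exists_X_pow_sub_X_pow_mem_fieldIdeal (K := K) i k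
    have hei : e i = 0 := Finsupp.notMem_support_iff.1 fun h => hi (he_supp h)
    refine ⟨Finsupp.single i m + e, ?_, ?_, ?_⟩
    · intro j hj
      rw [Finsupp.mem_support_iff, Finsupp.add_apply]
      rcases Finset.mem_union.1 (Finsupp.support_add hj) with hji | hjd
      · rw [Finset.mem_singleton.1 (Finsupp.support_single_subset hji)]
        simp [hk]
      · have := Finsupp.mem_support_iff.1 (he_supp hjd)
        omega
    · intro j
      by_cases hj : j = i
      · subst hj; simp [hei, hm]
      · simp [Ne.symm hj, he_le j]
    · rw [monomial_single_add, monomial_single_add]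
      exact Ideal.mul_sub_mul_mem _ hm_mem he_mem

theorem exists_mem_restrictDegree_sub_mem_fieldIdeal (p : MvPolynomial σ K) :
    ∃ r ∈ restrictDegree σ K (Fintype.card K - 1), p - r ∈ fieldIdeal σ K := by
  induction p using MvPolynomial.induction_on' with
  | monomial d c =>
    obtain ⟨e, -, he_le, he_mem⟩ := exists_monomial_sub_monomial_mem_fieldIdeal (K := K) d
    refine ⟨monomial e c, ?_, ?_⟩
    · rw [mem_restrictDegree]
      intro s hs
      rw [Finset.mem_singleton.1 (support_monomial_subset hs)]
      exact he_le
    · rw [show monomial d c - monomial e c = C c * (monomial d 1 - monomial e 1) by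
        simp [mul_sub, C_mul_monomial]]
      exact Ideal.mul_mem_left _ _ he_mem
  | add p q hp hq =>
    obtain ⟨r, hr, hpr⟩ := hp
    obtain ⟨s, hs, hqs⟩ := hq
    refine ⟨r + s, add_mem hr hs, ?_⟩
    rw [add_sub_add_comm]
    exact add_mem hpr hqs

theorem mem_fieldIdeal_iff [Finite σ] {p : MvPolynomial σ K} :
    p ∈ fieldIdeal σ K ↔ ∀ a, eval a p = 0 := by
  refine ⟨fun hp a => fieldIdeal_le_ker_eval a hp, fun hp => ?_⟩
  obtain ⟨r, hr, hpr⟩ := exists_mem_restrictDegree_sub_mem_fieldIdeal p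
  have hr_zero : r = 0 := by
    refine eq_zero_of_eval_eq_zero σ K r (fun a => ?_) hr
    have := fieldIdeal_le_ker_eval a hpr
    rwa [RingHom.mem_ker, map_sub, hp, zero_sub, neg_eq_zero] at this
  rwa [hr_zero, sub_zero] at hpr

theorem mem_fieldIdeal_sup_span_singleton_iff [Finite σ] {f g : MvPolynomial σ K} :
    g ∈ fieldIdeal σ K ⊔ Ideal.span {f} ↔ ∀ a, eval a f = 0 → eval a g = 0 := by
  constructor
  · intro hg a hfa
    exact sup_le (fieldIdeal_le_ker_eval a) ((Ideal.span_singleton_le_iff_mem _).2 hfa) hg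
  · intro hV
    have hvanish : g - g * f ^ (Fintype.card K - 1) ∈ fieldIdeal σ K :=
      mem_fieldIdeal_iff.2 fun a => by
        by_cases hfa : eval a f = 0
        · simp [hV a hfa]
        · simp [FiniteField.pow_card_sub_one_eq_one _ hfa]
    have hmul : g * f ^ (Fintype.card K - 1) ∈ Ideal.span {f} :=
      Ideal.mul_mem_left _ _ (Ideal.pow_mem_of_mem _ (Ideal.mem_span_singleton_self f) _
        (by have := Fintype.one_lt_card (α := K); omega))
    simpa using Submodule.add_mem_sup hvanish hmul

end MvPolynomial

theorem stmt_13 (n : ℕ) (f g : MvPolynomial (Fin n) (ZMod 2)) :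
    g ∈ Ideal.span ((Set.range fun i : Fin n => (X i : MvPolynomial (Fin n) (ZMod 2)) ^ 2 + X i) ∪ {f}) ↔
      {p : Fin n → ZMod 2 | eval p f = 0} ⊆ {p : Fin n → ZMod 2 | eval p g = 0} := by
  have hgens : (fun i : Fin n => (X i : MvPolynomial (Fin n) (ZMod 2)) ^ 2 + X i)
      = fun i => X i ^ Fintype.card (ZMod 2) - X i := by
    funext i
    rw [ZMod.card, CharTwo.sub_eq_add]
  rw [Ideal.span_union, hgens, ← fieldIdeal, mem_fieldIdeal_sup_span_singleton_iff]
  rfl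
end

section
/- Let I and J be boolean ideals with defining polynomials f and g respectively. Then the ideal quotient I : J equals (x_1^2+x_1,...,x_n^2+x_n, 1 + g + fg). -/
open MvPolynomial

theorem stmt_15 (n : ℕ) (f g : MvPolynomial (Fin n) (ZMod 2))
    (I J : Ideal (MvPolynomial (Fin n) (ZMod 2)))
    (hI : I = Ideal.span ((Set.range fun i : Fin n => (X i : MvPolynomial (Fin n) (ZMod 2)) ^ 2 + X i) ∪ {f}))
    (hJ : J = Ideal.span ((Set.range fun i : Fin n => (X i : MvPolynomial (Fin n) (ZMod 2)) ^ 2 + X i) ∪ {g})) :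
    I.colon J =
      Ideal.span ((Set.range fun i : Fin n => (X i : MvPolynomial (Fin n) (ZMod 2)) ^ 2 + X i) ∪
        {1 + g + f * g}) := by
  have h2 : (2 : MvPolynomial (Fin n) (ZMod 2)) = 0 := by
    have := CharP.cast_eq_zero (MvPolynomial (Fin n) (ZMod 2)) 2
    exact_mod_cast this
  set K : Ideal (MvPolynomial (Fin n) (ZMod 2)) :=
    Ideal.span (Set.range fun i : Fin n => (X i : MvPolynomial (Fin n) (ZMod 2)) ^ 2 + X i) with hK
  have hsq : ∀ p : MvPolynomial (Fin n) (ZMod 2), p ^ 2 + p ∈ K := by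
    intro p
    induction p using MvPolynomial.induction_on with
    | C a =>
      have ha : a ^ 2 + a = 0 := by revert a; decide
      rw [← C_pow, ← C_add, ha, map_zero]
      exact zero_mem K
    | add p q hp hq =>
      have hid : (p + q) ^ 2 + (p + q) = (p ^ 2 + p) + (q ^ 2 + q) + 2 * (p * q) := by ring
      rw [hid, h2, zero_mul, add_zero]
      exact add_mem hp hq
    | mul_X p i hp =>
      have hid : (p * X i) ^ 2 + p * X i
          = p ^ 2 * ((X i) ^ 2 + X i) + (p ^ 2 + p) * X i + 2 * (-(p ^ 2 * X i)) := by ring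
      rw [hid, h2, zero_mul, add_zero]
      exact add_mem (Ideal.mul_mem_left _ _ (Ideal.subset_span ⟨i, rfl⟩))
        (Ideal.mul_mem_right _ _ hp)
  have hKI : K ≤ I := by rw [hI]; exact Ideal.span_mono Set.subset_union_left
  have hgJ : g ∈ J := hJ ▸ Ideal.subset_span (Or.inr rfl)
  have hfI : f ∈ I := hI ▸ Ideal.subset_span (Or.inr rfl)
  have hcolon : ∀ a, a ∈ I.colon J ↔ a * g ∈ I := by
    intro a
    constructor
    · intro ha
      have := Submodule.mem_colon.mp ha g hgJ
      simpa [smul_eq_mul] using this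
    · intro ha
      rw [Submodule.mem_colon]
      intro p hp
      rw [hJ] at hp
      refine Submodule.span_induction ?_ ?_ ?_ ?_ hp
      · rintro x (⟨i, rfl⟩ | rfl)
        · exact I.mul_mem_left a (hKI (Ideal.subset_span ⟨i, rfl⟩))
        · simpa [smul_eq_mul] using ha
      · simp
      · intro x y _ _ hx hy
        simpa [smul_eq_mul, mul_add] using add_mem hx hy
      · intro r x _ hx
        rw [smul_comm]
        exact Submodule.smul_mem _ r hx
  ext a
  rw [hcolon a, Ideal.span_union, Submodule.mem_sup]
  constructor
  · intro hag
    rw [hI, Ideal.span_union, Submodule.mem_sup] at hag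
    obtain ⟨k, hk, c, hc, hkc⟩ := hag
    rw [Ideal.mem_span_singleton'] at hc
    obtain ⟨c', rfl⟩ := hc
    refine ⟨a + a * (1 + g + f * g), ?_, a * (1 + g + f * g),
      Ideal.mem_span_singleton'.mpr ⟨a, rfl⟩, by linear_combination (a * (1 + g + f * g)) * h2⟩
    have hid : a + a * (1 + g + f * g)
        = k * (1 + f) + c' * (f ^ 2 + f) + 2 * a := by
      linear_combination (-(1 + f)) * hkc
    rw [hid, h2, zero_mul, add_zero]
    exact add_mem (Ideal.mul_mem_right _ _ hk) (Ideal.mul_mem_left _ _ (hsq f))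
  · rintro ⟨k, hk, c, hc, rfl⟩
    rw [Ideal.mem_span_singleton'] at hc
    obtain ⟨c', rfl⟩ := hc
    have hid : (k + c' * (1 + g + f * g)) * g
        = k * g + c' * (f * g) + c' * (1 + f) * (g ^ 2 + g) + 2 * (-(c' * (f * g))) := by
      ring
    rw [hid, h2, zero_mul, add_zero]
    exact add_mem (add_mem (Ideal.mul_mem_right _ _ (hKI hk))
      (Ideal.mul_mem_left _ _ (Ideal.mul_mem_right _ _ hfI))) (Ideal.mul_mem_left _ _ (hKI (hsq g)))
end

section
/- Let I and J be boolean ideals with defining polynomials f and g. Then I + J = (x_1^2+x_1,...,x_n^2+x_n, (f+1)(g+1)+1). -/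
open MvPolynomial

set_option maxHeartbeats 2000000 in
theorem stmt_16 (n : ℕ) (f g : MvPolynomial (Fin n) (ZMod 2))
    (I J : Ideal (MvPolynomial (Fin n) (ZMod 2)))
    (hI : I = Ideal.span ((Set.range fun i : Fin n => (X i : MvPolynomial (Fin n) (ZMod 2)) ^ 2 + X i) ∪ {f}))
    (hJ : J = Ideal.span ((Set.range fun i : Fin n => (X i : MvPolynomial (Fin n) (ZMod 2)) ^ 2 + X i) ∪ {g})) :
    I + J =
      Ideal.span ((Set.range fun i : Fin n => (X i : MvPolynomial (Fin n) (ZMod 2)) ^ 2 + X i) ∪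
        {(f + 1) * (g + 1) + 1}) := by
  have h2 : (2 : MvPolynomial (Fin n) (ZMod 2)) = 0 := by
    have := CharP.cast_eq_zero (MvPolynomial (Fin n) (ZMod 2)) 2
    simpa using this
  set R : Set (MvPolynomial (Fin n) (ZMod 2)) :=
    Set.range fun i : Fin n => (X i : MvPolynomial (Fin n) (ZMod 2)) ^ 2 + X i with hRdef
  set K := Ideal.span R with hKdef
  have key : ∀ p : MvPolynomial (Fin n) (ZMod 2), p ^ 2 + p ∈ K := by
    intro p
    induction p using MvPolynomial.induction_on with
    | C a =>
        have ha : ∀ a : ZMod 2, a ^ 2 + a = 0 := by decide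
        have hc : (C a : MvPolynomial (Fin n) (ZMod 2)) ^ 2 + C a = 0 := by
          rw [← C_pow, ← C_add, ha, C_0]
        rw [hc]; exact K.zero_mem
    | add p q hp hq =>
        have hh : (p + q) ^ 2 + (p + q) = (p ^ 2 + p) + (q ^ 2 + q) := by
          linear_combination (p * q) * h2
        rw [hh]; exact K.add_mem hp hq
    | mul_X p i hp =>
        have hh : (p * X i) ^ 2 + p * X i
            = p ^ 2 * ((X i) ^ 2 + X i) + (p ^ 2 + p) * X i := by
          linear_combination (-(p ^ 2 * X i)) * h2
        rw [hh]
        exact K.add_mem (Ideal.mul_mem_left _ _ (Ideal.subset_span ⟨i, rfl⟩))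
          (Ideal.mul_mem_right _ _ hp)
  subst hI hJ
  rw [Ideal.span_union, Ideal.span_union, Ideal.span_union, Ideal.add_eq_sup, ← hKdef]
  have hfmem : f ∈ Ideal.span ({f} : Set (MvPolynomial (Fin n) (ZMod 2))) :=
    Ideal.subset_span (Set.mem_singleton f)
  have hgmem : g ∈ Ideal.span ({g} : Set (MvPolynomial (Fin n) (ZMod 2))) :=
    Ideal.subset_span (Set.mem_singleton g)
  have hhmem : (f + 1) * (g + 1) + 1 ∈
      Ideal.span ({(f + 1) * (g + 1) + 1} : Set (MvPolynomial (Fin n) (ZMod 2))) :=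
    Ideal.subset_span (Set.mem_singleton _)
  apply le_antisymm
  · refine sup_le (sup_le le_sup_left ?_) (sup_le le_sup_left ?_)
    · rw [Ideal.span_le]
      intro x hx
      rw [Set.mem_singleton_iff] at hx
      rw [hx]
      have hf : f = f * ((f + 1) * (g + 1) + 1) + (f ^ 2 + f) * (g + 1) := by
        linear_combination (-(f ^ 2 * g + f ^ 2 + f * g + f)) * h2
      have hm : f * ((f + 1) * (g + 1) + 1) + (f ^ 2 + f) * (g + 1) ∈
          K ⊔ Ideal.span ({(f + 1) * (g + 1) + 1} : Set (MvPolynomial (Fin n) (ZMod 2))) :=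
        Submodule.add_mem _
          (Submodule.mem_sup_right (Ideal.mul_mem_left _ _ hhmem))
          (Submodule.mem_sup_left (Ideal.mul_mem_right _ _ (key f)))
      rwa [← hf] at hm
    · rw [Ideal.span_le]
      intro x hx
      rw [Set.mem_singleton_iff] at hx
      rw [hx]
      have hg : g = g * ((f + 1) * (g + 1) + 1) + (g ^ 2 + g) * (f + 1) := by
        linear_combination (-(g ^ 2 * f + g ^ 2 + f * g + g)) * h2
      have hm : g * ((f + 1) * (g + 1) + 1) + (g ^ 2 + g) * (f + 1) ∈
          K ⊔ Ideal.span ({(f + 1) * (g + 1) + 1} : Set (MvPolynomial (Fin n) (ZMod 2))) :=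
        Submodule.add_mem _
          (Submodule.mem_sup_right (Ideal.mul_mem_left _ _ hhmem))
          (Submodule.mem_sup_left (Ideal.mul_mem_right _ _ (key g)))
      rwa [← hg] at hm
  · refine sup_le (le_sup_of_le_left le_sup_left) ?_
    rw [Ideal.span_le]
    intro x hx
    rw [Set.mem_singleton_iff] at hx
    rw [hx]
    have hsplit : (f + 1) * (g + 1) + 1 = f * (g + 1) + g := by
      linear_combination h2
    rw [hsplit]
    exact Submodule.add_mem _
      (Submodule.mem_sup_left (Submodule.mem_sup_right
        (Ideal.mul_mem_right _ _ hfmem)))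
      (Submodule.mem_sup_right (Submodule.mem_sup_right hgmem))
end

section
/- Let f = m_1 + ... + m_s be a sum of distinct squarefree monomials in Z_2[x_1,...,x_n]. Then the number of zeros of f in Z_2^n is given by 2^n + d_1 + ... + d_s, where d_i = (1/2)(-2)^i · Σ_{1 ≤ j_1 < ... < j_i ≤ s} 2^{n - deg(lcm(m_{j_1},...,m_{j_i}))}. -/
/-!
Over `ZMod 2` a squarefree monomial is the indicator of the subcube where its variables are `1`,
so `f p = 0` iff an even number of these subcubes contain `p`. Counting with
`2 * [N even] = 1 + (-1) ^ N` and expanding `(-1) ^ N = ∏ₖ (1 - 2 [p ∈ Cₖ])` over subsets `T`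
turns the count into `Σ_T (-2) ^ #T · #(⋂_{k ∈ T} Cₖ)`, and the intersection of the subcubes
indexed by `T` is the subcube of the lcm of the monomials, with `2 ^ (n - deg lcm)` points.
-/

open MvPolynomial Finset

theorem card_filter_forall_mem_eq {ι R : Type*} [Fintype ι] [DecidableEq ι] [Fintype R]
    [DecidableEq R] (S : Finset ι) (a : R) :
    #{p : ι → R | ∀ j ∈ S, p j = a} = Fintype.card R ^ (Fintype.card ι - #S) := by
  have : ({p : ι → R | ∀ j ∈ S, p j = a} : Finset _) =
      Fintype.piFinset fun j => if j ∈ S then {a} else univ := by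
    ext p
    simp only [mem_filter, mem_univ, true_and, Fintype.mem_piFinset]
    refine ⟨fun h j => ?_, fun h j hj => by simpa [hj] using h j⟩
    split_ifs with hj
    · exact mem_singleton.mpr (h j hj)
    · exact mem_univ _
  rw [this, Fintype.card_piFinset]
  simp only [apply_ite card, card_singleton, card_univ, prod_ite, prod_const_one, one_mul,
    prod_const, filter_not, card_sdiff, filter_mem_eq_inter, univ_inter, inter_univ]

theorem eval_monomial_one_zmod_two {σ : Type*} (e : σ →₀ ℕ) (p : σ → ZMod 2) :
    eval p (monomial e 1) = if ∀ j ∈ e.support, p j = 1 then 1 else 0 := by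
  rw [eval_monomial, one_mul, Finsupp.prod]
  split_ifs with h
  · exact prod_eq_one fun j hj => by rw [h j hj, one_pow]
  · push Not at h
    obtain ⟨j, hj, hpj⟩ := h
    have hpj0 : p j = 0 := (by decide : ∀ x : ZMod 2, x ≠ 1 → x = 0) _ hpj
    exact prod_eq_zero hj (by rw [hpj0, zero_pow (Finsupp.mem_support_iff.mp hj)])

theorem neg_one_pow_card_filter_eq_sum_powerset {K R : Type*} [CommRing R] (s : Finset K)
    (P : K → Prop) [DecidablePred P] :
    (-1 : R) ^ #{k ∈ s | P k} = ∑ T ∈ s.powerset, (-2) ^ #T * if ∀ k ∈ T, P k then 1 else 0 := by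
  have hfactor : ∀ k, (-1 : R) ^ (if P k then 1 else 0) = 1 + (-2) * if P k then 1 else 0 := by
    intro k; split_ifs <;> ring
  rw [card_filter, ← prod_pow_eq_pow_sum, prod_congr rfl fun k _ => hfactor k, prod_one_add]
  refine sum_congr rfl fun T _ => ?_
  rw [prod_mul_distrib, prod_const, prod_boole]

theorem two_mul_card_filter_even {X K : Type*} [Fintype X] [Fintype K] (P : X → K → Prop)
    [∀ x, DecidablePred (P x)] :
    2 * (#{x | Even #{k | P x k}} : ℤ) =
      Fintype.card X + ∑ T : Finset K, (-2 : ℤ) ^ #T * #{x | ∀ k ∈ T, P x k} := by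
  have hparity : ∀ x, 2 * (if Even #{k | P x k} then 1 else 0 : ℤ) = 1 + (-1) ^ #{k | P x k} := by
    intro x
    split_ifs with h
    · rw [h.neg_one_pow]; norm_num
    · rw [(Nat.not_even_iff_odd.mp h).neg_one_pow]; norm_num
  rw [natCast_card_filter, mul_sum, sum_congr rfl fun x _ => hparity x, sum_add_distrib]
  simp only [neg_one_pow_card_filter_eq_sum_powerset, powerset_univ]
  rw [sum_comm, sum_const, card_univ, nsmul_one]
  congr 1
  exact sum_congr rfl fun T _ => by rw [← mul_sum, natCast_card_filter]

theorem sum_neg_two_pow_card_mul {K : Type*} [Fintype K] (g : Finset K → ℤ) :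
    ∑ T : Finset K, (-2) ^ #T * g T =
      g ∅ + 2 * ∑ i ∈ Icc 1 (Fintype.card K),
        (-1) ^ i * 2 ^ (i - 1) * ∑ T ∈ univ.powersetCard i, g T := by
  rw [← powerset_univ, sum_powerset, card_univ, range_eq_Ico,
    sum_eq_sum_Ico_succ_bot (Nat.succ_pos _), Nat.zero_add, Nat.succ_eq_add_one,
    Ico_add_one_right_eq_Icc, powersetCard_zero, sum_singleton, card_empty, pow_zero, one_mul, mul_sum]
  congr 1
  refine sum_congr rfl fun i hi => ?_
  obtain ⟨j, rfl⟩ := Nat.exists_eq_add_of_le' (mem_Icc.mp hi).1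
  rw [Nat.add_sub_cancel, mul_sum, mul_sum]
  refine sum_congr rfl fun T hT => ?_
  rw [(mem_powersetCard.mp hT).2, neg_pow]
  ring

theorem stmt_19_general (n s : ℕ) (m : Fin s → (Fin n → ℕ)) :
    ((Finset.univ.filter (fun p : Fin n → ZMod 2 =>
        eval p (∑ k : Fin s, monomial (Finsupp.equivFunOnFinite.symm (m k)) (1 : ZMod 2)) = 0)).card : ℤ) =
      2 ^ n + ∑ i ∈ Finset.Icc 1 s,
        (-1) ^ i * 2 ^ (i - 1) *
          ∑ T ∈ Finset.univ.powersetCard i,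
            2 ^ (n - (Finset.univ.filter (fun j : Fin n => ∃ k ∈ T, 1 ≤ m k j)).card) := by
  have hzero : ∀ p : Fin n → ZMod 2,
      eval p (∑ k, monomial (Finsupp.equivFunOnFinite.symm (m k)) (1 : ZMod 2)) = 0 ↔
        Even #{k | ∀ j, 1 ≤ m k j → p j = 1} := by
    intro p
    simp only [map_sum, eval_monomial_one_zmod_two, Finsupp.mem_support_iff,
      Finsupp.coe_equivFunOnFinite_symm, ← Nat.one_le_iff_ne_zero, sum_boole,
      ZMod.natCast_eq_zero_iff_even]
  -- Stated for every decidability instance: here `∀ k ∈ T` over `Fin s` is decided by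
  -- `Nat.decidableForallFin`, inside `two_mul_card_filter_even` by `decidableDforallFinset`.
  have hcount : ∀ (T : Finset (Fin s))
      [DecidablePred fun p : Fin n → ZMod 2 => ∀ k ∈ T, ∀ j, 1 ≤ m k j → p j = 1],
      #{p : Fin n → ZMod 2 | ∀ k ∈ T, ∀ j, 1 ≤ m k j → p j = 1} =
        2 ^ (n - #{j : Fin n | ∃ k ∈ T, 1 ≤ m k j}) := by
    intro T _
    have := card_filter_forall_mem_eq {j : Fin n | ∃ k ∈ T, 1 ≤ m k j} (1 : ZMod 2)
    rw [ZMod.card, Fintype.card_fin] at this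
    rw [← this]
    congr 1
    ext p
    simp only [mem_filter, mem_univ, true_and]
    exact ⟨fun h j ⟨k, hk, hj⟩ => h k hk j hj, fun h k hk j hj => h j ⟨k, hk, hj⟩⟩
  have key := two_mul_card_filter_even fun (p : Fin n → ZMod 2) k => ∀ j, 1 ≤ m k j → p j = 1
  simp only [sum_neg_two_pow_card_mul, hcount, notMem_empty, false_and, exists_false,
    filter_false, card_empty, tsub_zero, Fintype.card_pi, ZMod.card, prod_const, card_univ,
    Fintype.card_fin, Nat.cast_pow, Nat.cast_ofNat] at key
  rw [filter_congr fun p _ => hzero p]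
  linarith

theorem stmt_19 (n s : ℕ) (m : Fin s → (Fin n → ℕ))
    (hinj : Function.Injective m) (hsf : ∀ k i, m k i ≤ 1) :
    ((Finset.univ.filter (fun p : Fin n → ZMod 2 =>
        eval p (∑ k : Fin s, monomial (Finsupp.equivFunOnFinite.symm (m k)) (1 : ZMod 2)) = 0)).card : ℤ) =
      2 ^ n + ∑ i ∈ Finset.Icc 1 s,
        (-1) ^ i * 2 ^ (i - 1) *
          ∑ T ∈ Finset.univ.powersetCard i,
            2 ^ (n - (Finset.univ.filter (fun j : Fin n => ∃ k ∈ T, 1 ≤ m k j)).card) :=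
  stmt_19_general n s m
end
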